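/- Let n ≥ 1 and let Z be an n×n matrix whose entries Z_{ij} are formal Laurent series over 𝔽₂ (elements of 𝔽₂((D)), with support bounded below). Suppose Z satisfies the reversal symmetry Z(1/D) = Z(D)^t in the coefficient-wise sense: for all indices i, j and all ℓ ∈ ℤ, the coefficient of D^ℓ in Z_{ij} equals the coefficient of D^{−ℓ} in Z_{ji}. Then every entry of Z has finite support, i.e., every entry of Z is a Laurent polynomial. -/

import Mathlib

theorem Set.IsWF.bddBelow {α : Type*} [LinearOrder α] [Nonempty α] {s : Set α} (hs : s.IsWF) :
    BddBelow s := by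
  rcases s.eq_empty_or_nonempty with rfl | hne
  · exact bddBelow_empty
  · exact ⟨hs.min hne, fun _ hx => hs.min_le hne hx⟩

/-- The support of `x` is bounded below, being well-founded, and bounded above, being the
negative of the well-founded support of `y`. -/
theorem LaurentSeries.support_finite_of_coeff_eq_coeff_neg {R : Type*} [Zero R]
    {x y : LaurentSeries R} (h : ∀ ℓ : ℤ, x.coeff ℓ = y.coeff (-ℓ)) : x.support.Finite := by
  have hsupport : x.support = -y.support := by
    ext ℓ
    simp only [Set.mem_neg, HahnSeries.mem_support, h]
  have hbddAbove : BddAbove x.support := hsupport ▸ y.isWF_support.bddBelow.neg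
  exact x.isWF_support.bddBelow.finite_of_bddAbove hbddAbove

theorem selfdual_stabilizer_entries_laurentPolynomial_general
    (n : ℕ)
    (Z : Matrix (Fin n) (Fin n) (LaurentSeries (ZMod 2)))
    (hsymm : ∀ i j : Fin n, ∀ ℓ : ℤ, (Z i j).coeff ℓ = (Z j i).coeff (-ℓ)) :
    ∀ i j : Fin n, (Z i j).support.Finite :=
  fun i j => LaurentSeries.support_finite_of_coeff_eq_coeff_neg (hsymm i j)

/-- If an `n × n` matrix `Z` of formal Laurent series over 𝔽₂ satisfies the
reversal symmetry `Z(1/D) = Z(D)ᵗ` coefficient-wise, i.e.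
`coeff (Z i j) ℓ = coeff (Z j i) (-ℓ)` for all `i, j, ℓ`, then every entry of
`Z` has finite support, i.e. every entry is a Laurent polynomial. -/
theorem selfdual_stabilizer_entries_laurentPolynomial
    (n : ℕ) (hn : 1 ≤ n)
    (Z : Matrix (Fin n) (Fin n) (LaurentSeries (ZMod 2)))
    (hsymm : ∀ i j : Fin n, ∀ ℓ : ℤ, (Z i j).coeff ℓ = (Z j i).coeff (-ℓ)) :
    ∀ i j : Fin n, (Z i j).support.Finite :=
  selfdual_stabilizer_entries_laurentPolynomial_general n Z hsymm
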